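/- For distinct points z, w ∈ ℂ, the principal value integral PV ∫_ℂ 1 / ((ζ - z)² · conj(ζ - w)²) dA(ζ) equals 0, where PV denotes the limit as ε → 0 of the integral over {ζ : |ζ - z| > ε and |ζ - w| > ε}, and the integral is also cut off at a large radius R → ∞ (the integrand is integrable at infinity). -/

import Mathlib

open Complex Filter MeasureTheory
open Metric Set
open scoped ENNReal NNReal


lemma meas_f (z w : ℂ) : Measurable (fun ζ : ℂ => 1 / ((ζ - z) ^ 2 * ((starRingEnd ℂ) (ζ - w)) ^ 2)) := by
  simp only [one_div]
  exact ((((measurable_id.sub measurable_const).pow_const 2).mul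
    (((continuous_star.measurable : Measurable (starRingEnd ℂ)).comp
      (measurable_id.sub measurable_const)).pow_const 2)).inv)

lemma norm_f (z w ζ : ℂ) : ‖(1 : ℂ) / ((ζ - z) ^ 2 * ((starRingEnd ℂ) (ζ - w)) ^ 2)‖
    = 1 / (‖ζ - z‖ ^ 2 * ‖ζ - w‖ ^ 2) := by
  rw [norm_div, norm_mul, norm_pow, norm_pow, Complex.norm_conj, norm_one]

-- key pointwise lower bound
lemma lower_bound (z : ℂ) {ε : ℝ} (hε : 0 < ε) (ζ : ℂ) (h : ε ≤ ‖ζ - z‖) :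
    ε / (1 + ε + ‖z‖) * (1 + ‖ζ‖) ≤ ‖ζ - z‖ := by
  have hz : 0 ≤ ‖z‖ := norm_nonneg z
  have h2 : ‖ζ‖ - ‖z‖ ≤ ‖ζ - z‖ := by
    simpa using norm_sub_norm_le ζ z
  have hpos : 0 < 1 + ε + ‖z‖ := by linarith
  rcases le_or_gt ‖ζ‖ (ε + ‖z‖) with ht | ht
  · have : ε / (1 + ε + ‖z‖) * (1 + ‖ζ‖) ≤ ε := by
      rw [div_mul_eq_mul_div, div_le_iff₀ hpos]
      nlinarith
    linarith
  · have : ε / (1 + ε + ‖z‖) * (1 + ‖ζ‖) ≤ ‖ζ‖ - ‖z‖ := by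
      rw [div_mul_eq_mul_div, div_le_iff₀ hpos]
      nlinarith [norm_nonneg ζ]
    linarith

lemma integrableOn_f (z w : ℂ) {ε : ℝ} (hε : 0 < ε) :
    IntegrableOn (fun ζ : ℂ => 1 / ((ζ - z) ^ 2 * ((starRingEnd ℂ) (ζ - w)) ^ 2))
      {ζ : ℂ | ε < ‖ζ - z‖ ∧ ε < ‖ζ - w‖} := by
  set s : Set ℂ := {ζ : ℂ | ε < ‖ζ - z‖ ∧ ε < ‖ζ - w‖} with hs
  have hopen : IsOpen s := by
    apply IsOpen.inter
    · exact isOpen_lt continuous_const ((continuous_norm).comp (continuous_id.sub continuous_const))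
    · exact isOpen_lt continuous_const ((continuous_norm).comp (continuous_id.sub continuous_const))
  set kz : ℝ := ε / (1 + ε + ‖z‖) with hkz
  set kw : ℝ := ε / (1 + ε + ‖w‖) with hkw
  have hkzpos : 0 < kz := by
    apply div_pos hε; nlinarith [norm_nonneg z]
  have hkwpos : 0 < kw := by
    apply div_pos hε; nlinarith [norm_nonneg w]
  have hint : Integrable (fun ζ : ℂ => (1 / (kz ^ 2 * kw ^ 2)) * (1 + ‖ζ‖) ^ (-(4:ℝ))) := by
    refine Integrable.const_mul ?_ _
    apply integrable_one_add_norm (E := ℂ)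
    simp [Complex.finrank_real_complex]; norm_num
  refine Integrable.mono' (hint.restrict) ((meas_f z w).aestronglyMeasurable) ?_
  refine (ae_restrict_iff' hopen.measurableSet).2 (Filter.Eventually.of_forall ?_)
  intro ζ hζ
  obtain ⟨h1, h2⟩ := hζ
  rw [norm_f]
  have hb1 := lower_bound z hε ζ h1.le
  have hb2 := lower_bound w hε ζ h2.le
  have hn : (0:ℝ) < 1 + ‖ζ‖ := by positivity
  have hrw : (1 + ‖ζ‖) ^ (-(4:ℝ)) = 1 / ((1 + ‖ζ‖)^2 * (1 + ‖ζ‖)^2) := by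
    rw [Real.rpow_neg hn.le]
    rw [show (4:ℝ) = ((4:ℕ):ℝ) by norm_num, Real.rpow_natCast]
    rw [one_div]
    congr 1
    ring
  rw [hrw, ← mul_div_assoc, mul_one, div_div]
  apply one_div_le_one_div_of_le
  · positivity
  · calc kz ^ 2 * kw ^ 2 * ((1 + ‖ζ‖) ^ 2 * (1 + ‖ζ‖) ^ 2)
        = (kz * (1 + ‖ζ‖))^2 * (kw * (1 + ‖ζ‖))^2 := by ring
      _ ≤ ‖ζ - z‖ ^ 2 * ‖ζ - w‖ ^ 2 := by
          apply mul_le_mul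
          · apply pow_le_pow_left₀ (by positivity) hb1
          · apply pow_le_pow_left₀ (by positivity) hb2
          · positivity
          · positivity


lemma det_complex_mul (d : ℂ) :
    ((((1 : ℂ →L[ℂ] ℂ).smulRight d).restrictScalars ℝ).det) = Complex.normSq d := by
  have h : (((1 : ℂ →L[ℂ] ℂ).smulRight d).restrictScalars ℝ : ℂ →ₗ[ℝ] ℂ)
      = Algebra.lmul ℝ ℂ d := by
    ext x
    simp [mul_comm]
  rw [ContinuousLinearMap.det, h, ← Algebra.norm_apply, Algebra.norm_complex_apply]

lemma transfer_lt {a b a' b' K Q t : ℝ} (hK : 0 < K) (hQ : 0 < Q)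
    (e1 : a' * Q = K * a) (e2 : b' * Q = K * b) (h : t * b < a) : t * b' < a' := by
  have h3 : t * b' * Q = K * (t * b) := by rw [mul_assoc, e2]; ring
  have h4 : t * b' * Q < a' * Q := by rw [h3, e1]; exact mul_lt_mul_of_pos_left h hK
  exact lt_of_mul_lt_mul_right h4 hQ.le

lemma transfer_lt' {a b a' b' K Q t : ℝ} (hK : 0 < K) (hQ : 0 < Q)
    (e1 : a' * Q = K * a) (e2 : b' * Q = K * b) (h : a < t * b) : a' < t * b' := by
  have h3 : t * b' * Q = K * (t * b) := by rw [mul_assoc, e2]; ring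
  have h4 : a' * Q < t * b' * Q := by rw [h3, e1]; exact mul_lt_mul_of_pos_left h hK
  exact lt_of_mul_lt_mul_right h4 hQ.le

lemma key_identity (z w ζ a c q : ℂ) (hc : c ≠ 0) (hq : q ≠ 0) (hu : ζ - z ≠ 0)
    (ht : ζ - w ≠ 0)
    (ha1 : a - z = I*c*(ζ-z)/q) (ha2 : a - w = c*(ζ-w)/q) :
    (Complex.normSq (I*c^2/q^2) : ℝ) • ((1:ℂ)/((a - z)^2 * (starRingEnd ℂ) (a - w)^2)) =
      -(1/((ζ-z)^2 * (starRingEnd ℂ) (ζ-w)^2)) := by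
  have hcq : (starRingEnd ℂ) q ≠ 0 := star_ne_zero.mpr hq
  have hcc : (starRingEnd ℂ) c ≠ 0 := star_ne_zero.mpr hc
  have hct : (starRingEnd ℂ) (ζ - w) ≠ 0 := star_ne_zero.mpr ht
  have e1 : (a - z)^2 = -(c^2*(ζ-z)^2/q^2) := by
    rw [ha1, div_pow, mul_pow, mul_pow, Complex.I_sq]; ring
  have e2 : ((starRingEnd ℂ) (a-w))^2
      = ((starRingEnd ℂ) c)^2 * ((starRingEnd ℂ) (ζ-w))^2 / ((starRingEnd ℂ) q)^2 := by
    rw [ha2, map_div₀, map_mul, div_pow, mul_pow]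
  have e3 : ((Complex.normSq (I*c^2/q^2) : ℝ) : ℂ)
      = (c^2 * ((starRingEnd ℂ) c)^2)/(q^2 * ((starRingEnd ℂ) q)^2) := by
    rw [← Complex.mul_conj, map_div₀, map_mul, map_pow, map_pow, Complex.conj_I,
      div_mul_div_comm]
    congr 1
    linear_combination (-(c^2*((starRingEnd ℂ) c)^2)) * Complex.I_sq
  rw [Complex.real_smul, e3, e1, e2]
  set u := ζ - z with hu'
  set t' := (starRingEnd ℂ) (ζ - w) with ht'
  set c' := (starRingEnd ℂ) c with hc''
  set q' := (starRingEnd ℂ) q with hq''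
  field_simp

lemma apollonius_vanish (z w : ℂ) (hzw : z ≠ w) {s S : ℝ} (hs : 0 < s) :
    ∫ ζ in {ζ : ℂ | s * ‖ζ - w‖ < ‖ζ - z‖ ∧
        ‖ζ - z‖ < S * ‖ζ - w‖},
      1 / ((ζ - z) ^ 2 * ((starRingEnd ℂ) (ζ - w)) ^ 2) = 0 := by
  set f : ℂ → ℂ := fun ζ => 1 / ((ζ - z) ^ 2 * ((starRingEnd ℂ) (ζ - w)) ^ 2) with hf
  set Ω : Set ℂ := {ζ : ℂ | s * ‖ζ - w‖ < ‖ζ - z‖ ∧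
        ‖ζ - z‖ < S * ‖ζ - w‖} with hΩ
  have hΩopen : IsOpen Ω := by
    apply IsOpen.inter
    · exact isOpen_lt (continuous_const.mul ((continuous_norm).comp
        (continuous_id.sub continuous_const))) ((continuous_norm).comp
        (continuous_id.sub continuous_const))
    · exact isOpen_lt ((continuous_norm).comp (continuous_id.sub continuous_const))
        (continuous_const.mul ((continuous_norm).comp
        (continuous_id.sub continuous_const)))
  set c : ℂ := z - w with hc'
  have hc : c ≠ 0 := sub_ne_zero.mpr hzw
  have hcabs : 0 < ‖c‖ := norm_pos_iff.mpr hc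
  set A : ℂ := z - I*w with hA
  set B : ℂ := -(1-I)*z*w with hB
  set C : ℂ := 1 - I with hC'
  set D : ℂ := I*z - w with hD
  have hC : C ≠ 0 := by
    rw [hC']; intro h
    have := congrArg Complex.im h
    simp at this
  have hdet : A * D - B * C = I * c^2 := by rw [hA, hB, hC', hD, hc']; ring
  have hIc : I * c^2 ≠ 0 := mul_ne_zero Complex.I_ne_zero (pow_ne_zero 2 hc)
  set σ : ℂ → ℂ := fun ζ => (A*ζ + B)/(C*ζ + D) with hσ
  set p : ℂ := -D/C with hp'
  set v : ℂ := A/C with hv'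
  have hqne : ∀ ζ : ℂ, ζ ≠ p → C*ζ + D ≠ 0 := by
    intro ζ hζ h
    apply hζ
    rw [hp', eq_div_iff hC]
    linear_combination h
  have hΩz : ∀ ζ ∈ Ω, ζ - z ≠ 0 := by
    intro ζ hζ h
    obtain ⟨h1, -⟩ := hζ
    simp only [h, norm_zero] at h1
    nlinarith [norm_nonneg (ζ - w)]
  have hΩw : ∀ ζ ∈ Ω, ζ - w ≠ 0 := by
    intro ζ hζ h
    obtain ⟨-, h2⟩ := hζ
    simp only [h, norm_zero, mul_zero] at h2
    nlinarith [norm_nonneg (ζ - z)]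
  have hz1 : ∀ ζ : ℂ, C*ζ + D ≠ 0 → (σ ζ - z) * (C*ζ + D) = I*c*(ζ-z) := by
    intro ζ hq
    rw [hσ]
    simp only; rw [sub_mul, div_mul_cancel₀ _ hq]
    rw [hA, hB, hC', hD, hc']
    ring
  have hw1 : ∀ ζ : ℂ, C*ζ + D ≠ 0 → (σ ζ - w) * (C*ζ + D) = c*(ζ-w) := by
    intro ζ hq
    rw [hσ]
    simp only; rw [sub_mul, div_mul_cancel₀ _ hq]
    rw [hA, hB, hC', hD, hc']
    ring
  have hiff : ∀ ζ : ℂ, C*ζ + D ≠ 0 → (σ ζ ∈ Ω ↔ ζ ∈ Ω) := by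
    intro ζ hq
    have hqabs : 0 < ‖C*ζ + D‖ := norm_pos_iff.mpr hq
    have e1 : ‖σ ζ - z‖ * ‖C*ζ + D‖
        = ‖c‖ * ‖ζ - z‖ := by
      rw [← norm_mul, hz1 ζ hq, norm_mul, norm_mul, Complex.norm_I, one_mul]
    have e2 : ‖σ ζ - w‖ * ‖C*ζ + D‖
        = ‖c‖ * ‖ζ - w‖ := by
      rw [← norm_mul, hw1 ζ hq, norm_mul]
    have e1' : ‖ζ - z‖ * ‖c‖
        = ‖C*ζ + D‖ * ‖σ ζ - z‖ := by linarith [e1]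
    have e2' : ‖ζ - w‖ * ‖c‖
        = ‖C*ζ + D‖ * ‖σ ζ - w‖ := by linarith [e2]
    constructor
    · rintro ⟨h1, h2⟩
      exact ⟨transfer_lt hqabs hcabs e1' e2' h1, transfer_lt' hqabs hcabs e1' e2' h2⟩
    · rintro ⟨h1, h2⟩
      exact ⟨transfer_lt hcabs hqabs e1 e2 h1, transfer_lt' hcabs hqabs e1 e2 h2⟩
  have himg : σ '' (Ω \ {p}) = Ω \ {v} := by
    ext η
    constructor
    · rintro ⟨ζ, ⟨hζΩ, hζp⟩, rfl⟩
      have hq := hqne ζ (by simpa using hζp)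
      refine ⟨(hiff ζ hq).2 hζΩ, ?_⟩
      simp only [mem_singleton_iff]
      intro hv
      rw [hσ] at hv
      simp only at hv
      rw [hv', div_eq_div_iff hq hC] at hv
      exact hIc (by rw [← hdet]; linear_combination -hv)
    · rintro ⟨hηΩ, hηv⟩
      simp only [mem_singleton_iff] at hηv
      have hAC : A - C*η ≠ 0 := by
        intro h
        apply hηv
        rw [hv', eq_div_iff hC]
        linear_combination -h
      set ζ' : ℂ := (D*η - B)/(A - C*η) with hζ''
      have hq2 : C*ζ' + D = I*c^2/(A - C*η) := by
        rw [hζ'', eq_div_iff hAC]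
        field_simp
        linear_combination hdet
      have hq2ne : C*ζ' + D ≠ 0 := by
        rw [hq2]; exact div_ne_zero hIc hAC
      have hσζ' : σ ζ' = η := by
        rw [hσ]
        simp only
        rw [div_eq_iff hq2ne, hζ'']
        linear_combination div_mul_cancel₀ (D*η - B) hAC
      refine ⟨ζ', ⟨(hiff ζ' hq2ne).1 (by rw [hσζ']; exact hηΩ), ?_⟩, hσζ'⟩
      simp only [mem_singleton_iff]
      intro h
      apply hq2ne
      rw [h, hp']
      field_simp
      ring
  have hinj : InjOn σ (Ω \ {p}) := by
    rintro ζ₁ ⟨-, h₁⟩ ζ₂ ⟨-, h₂⟩ he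
    have hq₁ := hqne ζ₁ (by simpa using h₁)
    have hq₂ := hqne ζ₂ (by simpa using h₂)
    rw [hσ] at he
    simp only at he
    rw [div_eq_div_iff hq₁ hq₂] at he
    have h0 : (I*c^2) * (ζ₁ - ζ₂) = 0 := by
      rw [← hdet]; linear_combination he
    have := mul_eq_zero.1 h0
    rcases this with h | h
    · exact absurd h hIc
    · exact sub_eq_zero.1 h
  -- derivative
  set F : ℂ → (ℂ →L[ℝ] ℂ) :=
    fun ζ => ((1 : ℂ →L[ℂ] ℂ).smulRight (I*c^2/(C*ζ + D)^2)).restrictScalars ℝ with hF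
  have hs₀meas : MeasurableSet (Ω \ {p}) :=
    hΩopen.measurableSet.diff (measurableSet_singleton p)
  have hder : ∀ ζ ∈ Ω \ {p}, HasFDerivWithinAt σ (F ζ) (Ω \ {p}) ζ := by
    rintro ζ ⟨-, hζp⟩
    have hq := hqne ζ (by simpa using hζp)
    have h1 : HasDerivAt (fun ζ : ℂ => A*ζ + B) A ζ := by
      simpa using ((hasDerivAt_id ζ).const_mul A).add_const B
    have h2 : HasDerivAt (fun ζ : ℂ => C*ζ + D) C ζ := by
      simpa using ((hasDerivAt_id ζ).const_mul C).add_const D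
    have hd : HasDerivAt σ (I*c^2/(C*ζ+D)^2) ζ := by
      have := h1.div h2 hq
      rw [hσ]
      rw [show I*c^2/(C*ζ+D)^2 = (A*(C*ζ+D) - (A*ζ+B)*C)/(C*ζ+D)^2 by rw [← hdet]; ring]
      exact this
    exact ((hd.hasFDerivAt.restrictScalars ℝ).hasFDerivWithinAt)
  have hkey : ∀ ζ ∈ Ω \ {p}, |(F ζ).det| • f (σ ζ) = - f ζ := by
    rintro ζ ⟨hζΩ, hζp⟩
    have hq := hqne ζ (by simpa using hζp)
    have hu := hΩz ζ hζΩ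
    have ht := hΩw ζ hζΩ
    have hq2 : (C*ζ + D)^2 ≠ 0 := pow_ne_zero 2 hq
    rw [hF]
    simp only
    rw [det_complex_mul, _root_.abs_of_nonneg (Complex.normSq_nonneg _)]
    have ha1 : σ ζ - z = I*c*(ζ-z)/(C*ζ+D) := by
      rw [eq_div_iff hq]; exact hz1 ζ hq
    have ha2 : σ ζ - w = c*(ζ-w)/(C*ζ+D) := by
      rw [eq_div_iff hq]; exact hw1 ζ hq
    rw [hf]
    simp only
    exact key_identity z w ζ (σ ζ) c (C*ζ+D) hc hq hu ht ha1 ha2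
  -- assemble
  have hae1 : (Ω \ {p} : Set ℂ) =ᵐ[volume] Ω := by
    rw [MeasureTheory.diff_ae_eq_self]
    exact measure_mono_null (inter_subset_right) (measure_singleton p)
  have hae2 : (Ω \ {v} : Set ℂ) =ᵐ[volume] Ω := by
    rw [MeasureTheory.diff_ae_eq_self]
    exact measure_mono_null (inter_subset_right) (measure_singleton v)
  have hCoV := MeasureTheory.integral_image_eq_integral_abs_det_fderiv_smul
    volume hs₀meas hder hinj f
  have step : ∫ ζ in Ω, f ζ = - ∫ ζ in Ω, f ζ := by
    calc ∫ ζ in Ω, f ζ = ∫ ζ in (Ω \ {v}), f ζ := (setIntegral_congr_set hae2).symm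
      _ = ∫ ζ in σ '' (Ω \ {p}), f ζ := by rw [himg]
      _ = ∫ ζ in (Ω \ {p}), |(F ζ).det| • f (σ ζ) := hCoV
      _ = ∫ ζ in (Ω \ {p}), - f ζ := setIntegral_congr_fun hs₀meas hkey
      _ = - ∫ ζ in (Ω \ {p}), f ζ := integral_neg _
      _ = - ∫ ζ in Ω, f ζ := by rw [setIntegral_congr_set hae1]
  have : (2 : ℂ) • ∫ ζ in Ω, f ζ = 0 := by
    rw [two_smul]
    linear_combination step
  simpa using this

set_option maxHeartbeats 1000000 in
/-- Genus-zero case of `∫ L(z,ζ) ∧ conj(L(ζ,w)) = K(z,w)`: for distinct `z, w ∈ ℂ`,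
the integrand `1/((ζ-z)² conj(ζ-w)²)` is integrable away from the two singularities
(in particular at infinity), and its principal value integral over `ℂ` vanishes. -/
theorem schiffer_kernel_composition_vanishes (z w : ℂ) (hzw : z ≠ w) :
    (∀ ε : ℝ, 0 < ε →
      IntegrableOn (fun ζ : ℂ => 1 / ((ζ - z) ^ 2 * ((starRingEnd ℂ) (ζ - w)) ^ 2))
        {ζ : ℂ | ε < ‖ζ - z‖ ∧ ε < ‖ζ - w‖}) ∧
    Tendsto (fun ε : ℝ =>
        ∫ ζ in {ζ : ℂ | ε < ‖ζ - z‖ ∧ ε < ‖ζ - w‖},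
          1 / ((ζ - z) ^ 2 * ((starRingEnd ℂ) (ζ - w)) ^ 2))
      (nhdsWithin 0 (Set.Ioi 0)) (nhds 0) := by
  refine ⟨fun ε hε => integrableOn_f z w hε, ?_⟩
  set f : ℂ → ℂ := fun ζ => 1 / ((ζ - z) ^ 2 * ((starRingEnd ℂ) (ζ - w)) ^ 2) with hf
  set r : ℝ := ‖z - w‖ with hr'
  have hr : 0 < r := norm_pos_iff.mpr (sub_ne_zero.mpr hzw)
  set g : ℝ → ℝ := fun ε => 32 * Real.pi * ε * (r + ε) / r ^ 4 with hg'
  apply squeeze_zero_norm'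
  · -- eventual bound
    filter_upwards [Ioo_mem_nhdsGT_of_mem (show (0:ℝ) ∈ Ico 0 (r/2) from
      ⟨le_refl 0, by positivity⟩)] with ε hε
    obtain ⟨hε0, hεr⟩ := hε
    set a : ℝ := ε * r / (r + 2*ε) with ha'
    have hapos : 0 < a := by positivity
    have ha_lt : a < ε := by
      rw [ha', div_lt_iff₀ (by positivity)]
      nlinarith
    set E : Set ℂ := {ζ : ℂ | ε < ‖ζ - z‖ ∧ ε < ‖ζ - w‖} with hE'
    set Ωout : Set ℂ := {ζ : ℂ | (ε/(ε+r)) * ‖ζ - w‖ < ‖ζ - z‖ ∧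
        ‖ζ - z‖ < ((ε+r)/ε) * ‖ζ - w‖} with hΩ'
    have tri1 : ∀ ζ : ℂ, ‖ζ - w‖ ≤ ‖ζ - z‖ + r :=
      fun ζ => norm_sub_le_norm_sub_add_norm_sub ζ z w
    have tri2 : ∀ ζ : ℂ, ‖ζ - z‖ ≤ ‖ζ - w‖ + r := by
      intro ζ
      have := norm_sub_le_norm_sub_add_norm_sub ζ w z
      rwa [norm_sub_rev w z, ← hr'] at this
    have tri3 : ∀ ζ : ℂ, r ≤ ‖ζ - z‖ + ‖ζ - w‖ := by
      intro ζ
      have := norm_sub_le_norm_sub_add_norm_sub z ζ w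
      rwa [norm_sub_rev z ζ, ← hr'] at this
    have hEsub : E ⊆ Ωout := by
      rintro ζ ⟨h1, h2⟩
      constructor
      · rw [div_mul_eq_mul_div, div_lt_iff₀ (by positivity)]
        nlinarith [tri1 ζ]
      · rw [div_mul_eq_mul_div, lt_div_iff₀ (by positivity)]
        nlinarith [tri2 ζ]
    have hOsub : Ωout ⊆ {ζ : ℂ | a < ‖ζ - z‖ ∧ a < ‖ζ - w‖} := by
      rintro ζ ⟨h1, h2⟩
      rw [div_mul_eq_mul_div, div_lt_iff₀ (by positivity)] at h1
      rw [div_mul_eq_mul_div, lt_div_iff₀ (by positivity)] at h2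
      constructor
      · rw [ha', div_lt_iff₀ (by positivity)]
        nlinarith [tri3 ζ, norm_nonneg (ζ - w)]
      · rw [ha', div_lt_iff₀ (by positivity)]
        nlinarith [tri3 ζ, norm_nonneg (ζ - z)]
    have hintOut : IntegrableOn f Ωout := (integrableOn_f z w hapos).mono_set hOsub
    have hEopen : IsOpen E := by
      apply IsOpen.inter
      · exact isOpen_lt continuous_const ((continuous_norm).comp
          (continuous_id.sub continuous_const))
      · exact isOpen_lt continuous_const ((continuous_norm).comp
          (continuous_id.sub continuous_const))
    have hIout : ∫ ζ in Ωout, f ζ = 0 :=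
      apollonius_vanish z w hzw (div_pos hε0 (by positivity))
    have hdiff : ∫ ζ in Ωout \ E, f ζ = (∫ ζ in Ωout, f ζ) - ∫ ζ in E, f ζ :=
      integral_diff hEopen.measurableSet hintOut hEsub
    have hEeq : ∫ ζ in E, f ζ = - ∫ ζ in Ωout \ E, f ζ := by
      rw [hdiff, hIout]; ring
    -- volume and pointwise bounds
    set M : ℝ := 4 / (a^2 * r^2) with hM'
    set Dset : Set ℂ := (closedBall z ε \ ball z a) ∪ (closedBall w ε \ ball w a) with hD'
    have hsubD : Ωout \ E ⊆ Dset := by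
      rintro ζ ⟨hζΩ, hζE⟩
      obtain ⟨hza, hwa⟩ := hOsub hζΩ
      rw [hE'] at hζE
      simp only [mem_setOf_eq, not_and_or, not_lt] at hζE
      rcases hζE with h | h
      · left
        constructor
        · rw [mem_closedBall, Complex.dist_eq]; exact h
        · rw [mem_ball, Complex.dist_eq, not_lt]; exact hza.le
      · right
        constructor
        · rw [mem_closedBall, Complex.dist_eq]; exact h
        · rw [mem_ball, Complex.dist_eq, not_lt]; exact hwa.le
    have hnorm : ∀ ζ ∈ Ωout \ E, ‖f ζ‖ ≤ M := by
      rintro ζ hζ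
      obtain ⟨hza, hwa⟩ := hOsub hζ.1
      have hcases := hsubD hζ
      rw [hf]
      simp only
      rw [norm_f]
      have hbound : a^2 * (r/2)^2 ≤ ‖ζ - z‖^2 * ‖ζ - w‖^2 := by
        rcases hcases with h | h
        · have h1 : ‖ζ - z‖ ≤ ε := by
            have := h.1; rwa [mem_closedBall, Complex.dist_eq] at this
          have h2 : r/2 ≤ ‖ζ - w‖ := by nlinarith [tri3 ζ]
          have e1 : a^2 ≤ ‖ζ - z‖^2 := by nlinarith
          have e2 : (r/2)^2 ≤ ‖ζ - w‖^2 := by nlinarith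
          exact mul_le_mul e1 e2 (by positivity) (by positivity)
        · have h1 : ‖ζ - w‖ ≤ ε := by
            have := h.1; rwa [mem_closedBall, Complex.dist_eq] at this
          have h2 : r/2 ≤ ‖ζ - z‖ := by nlinarith [tri3 ζ]
          have e1 : a^2 ≤ ‖ζ - w‖^2 := by nlinarith
          have e2 : (r/2)^2 ≤ ‖ζ - z‖^2 := by nlinarith
          have := mul_le_mul e2 e1 (by positivity) (by positivity)
          nlinarith [this]
      have hM2 : M = 1 / (a^2 * (r/2)^2) := by rw [hM']; field_simp; ring
      rw [hM2]
      apply one_div_le_one_div_of_le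
      · positivity
      · exact hbound
    have hX : 0 ≤ Real.pi * ε^2 - Real.pi * a^2 := by
      have haε2 : a^2 ≤ ε^2 := by nlinarith
      nlinarith [Real.pi_pos]
    have hball1 : ball z a ⊆ closedBall z ε :=
      (ball_subset_ball ha_lt.le).trans ball_subset_closedBall
    have hball2 : ball w a ⊆ closedBall w ε :=
      (ball_subset_ball ha_lt.le).trans ball_subset_closedBall
    have hd1 : volume (closedBall z ε \ ball z a)
        = ENNReal.ofReal (Real.pi * ε^2 - Real.pi * a^2) := by
      rw [measure_diff hball1 measurableSet_ball.nullMeasurableSet measure_ball_lt_top.ne,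
        Complex.volume_closedBall, Complex.volume_ball]
      rw [← ENNReal.ofReal_pow hε0.le, ← ENNReal.ofReal_pow hapos.le]
      rw [(show ((NNReal.pi : ℝ≥0∞)) = ENNReal.ofReal Real.pi by
        rw [← NNReal.coe_real_pi, ENNReal.ofReal_coe_nnreal])]
      rw [← ENNReal.ofReal_mul (by positivity), ← ENNReal.ofReal_mul (by positivity),
        ← ENNReal.ofReal_sub _ (by positivity)]
      ring_nf
    have hd2 : volume (closedBall w ε \ ball w a)
        = ENNReal.ofReal (Real.pi * ε^2 - Real.pi * a^2) := by
      rw [measure_diff hball2 measurableSet_ball.nullMeasurableSet measure_ball_lt_top.ne,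
        Complex.volume_closedBall, Complex.volume_ball]
      rw [← ENNReal.ofReal_pow hε0.le, ← ENNReal.ofReal_pow hapos.le]
      rw [(show ((NNReal.pi : ℝ≥0∞)) = ENNReal.ofReal Real.pi by
        rw [← NNReal.coe_real_pi, ENNReal.ofReal_coe_nnreal])]
      rw [← ENNReal.ofReal_mul (by positivity), ← ENNReal.ofReal_mul (by positivity),
        ← ENNReal.ofReal_sub _ (by positivity)]
      ring_nf
    have hvolD : volume Dset ≤ ENNReal.ofReal (2 * (Real.pi * ε^2 - Real.pi * a^2)) := by
      calc volume Dset ≤ volume (closedBall z ε \ ball z a) +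
          volume (closedBall w ε \ ball w a) := measure_union_le _ _
        _ = ENNReal.ofReal (2 * (Real.pi * ε^2 - Real.pi * a^2)) := by
            rw [hd1, hd2, ← ENNReal.ofReal_add hX hX]
            ring_nf
    have hvolfin : volume (Ωout \ E) < ⊤ :=
      lt_of_le_of_lt (le_trans (measure_mono hsubD) hvolD) ENNReal.ofReal_lt_top
    have hbnd : ‖∫ ζ in Ωout \ E, f ζ‖ ≤ M * (volume (Ωout \ E)).toReal :=
      norm_setIntegral_le_of_norm_le_const hvolfin hnorm
    have hvol2 : (volume (Ωout \ E)).toReal ≤ 2 * (Real.pi * ε^2 - Real.pi * a^2) := by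
      have := le_trans (measure_mono hsubD) hvolD
      calc (volume (Ωout \ E)).toReal
          ≤ (ENNReal.ofReal (2 * (Real.pi * ε^2 - Real.pi * a^2))).toReal :=
            ENNReal.toReal_mono ENNReal.ofReal_ne_top this
        _ = 2 * (Real.pi * ε^2 - Real.pi * a^2) :=
            ENNReal.toReal_ofReal (by nlinarith [hX])
    have hMpos : 0 < M := by positivity
    have final : ‖∫ ζ in E, f ζ‖ ≤ g ε := by
      rw [hEeq, norm_neg]
      calc ‖∫ ζ in Ωout \ E, f ζ‖ ≤ M * (volume (Ωout \ E)).toReal := hbnd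
        _ ≤ M * (2 * (Real.pi * ε^2 - Real.pi * a^2)) := by
            exact mul_le_mul_of_nonneg_left hvol2 hMpos.le
        _ = g ε := by
            rw [hM', ha', hg']
            field_simp
            ring
    exact final
  · -- tendsto of g
    have hcont : Tendsto g (nhds 0) (nhds (g 0)) := by
      apply Continuous.tendsto
      rw [hg']
      exact ((((continuous_const.mul continuous_id).mul
        (continuous_const.add continuous_id))).div_const _)
    have : g 0 = 0 := by simp [hg']
    rw [this] at hcont
    exact hcont.mono_left nhdsWithin_le_nhds
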